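/- arXiv:2110.12046 — 2 statements merged into one kernel-verified Lean document; each statement's English description precedes it below -/
import Mathlib

section
/- Let A and B be matrices with Moore–Penrose pseudo-inverses A⁺ and B⁺. Then ‖B⁺ − A⁺‖ ≤ 3·max(‖A⁺‖², ‖B⁺‖²)·‖B − A‖, where ‖·‖ is the spectral (operator) norm. -/
/-!
Wedin's decomposition: the Penrose equations give
`B⁺ - A⁺ = -B⁺ (B - A) A⁺ + B⁺ B⁺ᴴ (B - A)ᴴ (1 - A A⁺) + (1 - B⁺ B) (B - A)ᴴ A⁺ᴴ A⁺`.
Since `1 - A A⁺` and `1 - B⁺ B` are orthogonal projections, of norm at most one, and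
`‖Mᴴ‖ = ‖M‖`, the three terms are bounded by `‖B⁺‖ ‖A⁺‖ ‖E‖`, `‖B⁺‖² ‖E‖` and `‖A⁺‖² ‖E‖`
with `E = B - A`.
-/

open scoped Matrix Matrix.Norms.L2Operator

namespace Matrix

variable {m n : Type*} [Fintype m] [Fintype n]

section Algebra

variable {R : Type*} [Ring R] [StarRing R]

structure IsMoorePenroseInverse (A : Matrix m n R) (Ap : Matrix n m R) : Prop where
  mul_mul_self : A * Ap * A = A
  mul_mul_self' : Ap * A * Ap = Ap
  isHermitian_mul : (A * Ap).IsHermitian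
  isHermitian_mul' : (Ap * A).IsHermitian

namespace IsMoorePenroseInverse

variable {A : Matrix m n R} {Ap : Matrix n m R}

theorem isStarProjection_mul [DecidableEq m] (h : IsMoorePenroseInverse A Ap) :
    IsStarProjection (A * Ap) where
  isIdempotentElem := by rw [IsIdempotentElem, ← Matrix.mul_assoc, h.mul_mul_self]
  isSelfAdjoint := h.isHermitian_mul.isSelfAdjoint

theorem isStarProjection_mul' [DecidableEq n] (h : IsMoorePenroseInverse A Ap) :
    IsStarProjection (Ap * A) where
  isIdempotentElem := by rw [IsIdempotentElem, ← Matrix.mul_assoc, h.mul_mul_self']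
  isSelfAdjoint := h.isHermitian_mul'.isSelfAdjoint

theorem conjTranspose_mul_mul (h : IsMoorePenroseInverse A Ap) : Aᴴ * (A * Ap) = Aᴴ := by
  rw [← h.isHermitian_mul.eq, ← conjTranspose_mul, h.mul_mul_self]

theorem mul_mul_conjTranspose (h : IsMoorePenroseInverse A Ap) : Ap * A * Aᴴ = Aᴴ := by
  rw [← h.isHermitian_mul'.eq, ← conjTranspose_mul, ← Matrix.mul_assoc, h.mul_mul_self]

theorem mul_conjTranspose_mul_conjTranspose (h : IsMoorePenroseInverse A Ap) :
    Ap * Apᴴ * Aᴴ = Ap := by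
  rw [Matrix.mul_assoc, ← conjTranspose_mul, h.isHermitian_mul.eq, ← Matrix.mul_assoc,
    h.mul_mul_self']

theorem conjTranspose_mul_conjTranspose_mul (h : IsMoorePenroseInverse A Ap) :
    Aᴴ * (Apᴴ * Ap) = Ap := by
  rw [← Matrix.mul_assoc, ← conjTranspose_mul, h.isHermitian_mul'.eq, h.mul_mul_self']

theorem sub_eq_wedin [DecidableEq m] [DecidableEq n] {B : Matrix m n R} {Bp : Matrix n m R}
    (hA : IsMoorePenroseInverse A Ap) (hB : IsMoorePenroseInverse B Bp) :
    Bp - Ap = -(Bp * (B - A) * Ap) + Bp * Bpᴴ * (B - A)ᴴ * (1 - A * Ap)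
      + (1 - Bp * B) * (B - A)ᴴ * Apᴴ * Ap := by
  have h₂ : Bp * Bpᴴ * (B - A)ᴴ * (1 - A * Ap) = Bp - Bp * (A * Ap) := by
    simp only [conjTranspose_sub, Matrix.mul_sub, Matrix.sub_mul, Matrix.mul_one,
      hB.mul_conjTranspose_mul_conjTranspose, Matrix.mul_assoc _ Aᴴ, hA.conjTranspose_mul_mul]
    abel
  have h₃ : (1 - Bp * B) * (B - A)ᴴ * Apᴴ * Ap = Bp * (B * Ap) - Ap := by
    simp only [conjTranspose_sub, Matrix.mul_sub, Matrix.sub_mul, Matrix.one_mul,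
      hB.mul_mul_conjTranspose]
    simp only [Matrix.mul_assoc, hA.conjTranspose_mul_conjTranspose_mul]
    abel
  rw [h₂, h₃]
  simp only [Matrix.mul_sub, Matrix.sub_mul, Matrix.mul_assoc]
  abel

end IsMoorePenroseInverse

end Algebra

section Norm

variable [DecidableEq m] [DecidableEq n] {𝕜 : Type*} [RCLike 𝕜]

theorem l2_opNorm_mul_mul_le {l p : Type*} [Fintype l] [Fintype p] [DecidableEq p]
    (X : Matrix l m 𝕜) (Y : Matrix m n 𝕜) (Z : Matrix n p 𝕜) : ‖X * Y * Z‖ ≤ ‖X‖ * ‖Y‖ * ‖Z‖ :=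
  (l2_opNorm_mul _ _).trans <| by gcongr; exact l2_opNorm_mul _ _

theorem IsMoorePenroseInverse.norm_sub_le {A B : Matrix m n 𝕜} {Ap Bp : Matrix n m 𝕜}
    (hA : IsMoorePenroseInverse A Ap) (hB : IsMoorePenroseInverse B Bp) :
    ‖Bp - Ap‖ ≤ (‖Bp‖ * ‖Ap‖ + ‖Bp‖ ^ 2 + ‖Ap‖ ^ 2) * ‖B - A‖ := by
  have hP : ‖1 - A * Ap‖ ≤ 1 := hA.isStarProjection_mul.one_sub.norm_le
  have hQ : ‖1 - Bp * B‖ ≤ 1 := hB.isStarProjection_mul'.one_sub.norm_le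
  set E := B - A
  have t₁ : ‖Bp * E * Ap‖ ≤ ‖Bp‖ * ‖Ap‖ * ‖E‖ :=
    (l2_opNorm_mul_mul_le _ _ _).trans_eq (by ring)
  have t₂ : ‖Bp * Bpᴴ * Eᴴ * (1 - A * Ap)‖ ≤ ‖Bp‖ ^ 2 * ‖E‖ := calc
    _ ≤ ‖Bp * Bpᴴ * Eᴴ‖ * ‖1 - A * Ap‖ := l2_opNorm_mul _ _
    _ ≤ ‖Bp‖ * ‖Bpᴴ‖ * ‖Eᴴ‖ * 1 := by gcongr; exact l2_opNorm_mul_mul_le _ _ _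
    _ = ‖Bp‖ ^ 2 * ‖E‖ := by rw [l2_opNorm_conjTranspose, l2_opNorm_conjTranspose]; ring
  have t₃ : ‖(1 - Bp * B) * Eᴴ * Apᴴ * Ap‖ ≤ ‖Ap‖ ^ 2 * ‖E‖ := calc
    _ ≤ ‖(1 - Bp * B) * Eᴴ * Apᴴ‖ * ‖Ap‖ := l2_opNorm_mul _ _
    _ ≤ 1 * ‖Eᴴ‖ * ‖Apᴴ‖ * ‖Ap‖ := by
      gcongr; exact (l2_opNorm_mul_mul_le _ _ _).trans (by gcongr)
    _ = ‖Ap‖ ^ 2 * ‖E‖ := by rw [l2_opNorm_conjTranspose, l2_opNorm_conjTranspose]; ring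
  calc ‖Bp - Ap‖
      ≤ ‖-(Bp * E * Ap)‖ + ‖Bp * Bpᴴ * Eᴴ * (1 - A * Ap)‖ + ‖(1 - Bp * B) * Eᴴ * Apᴴ * Ap‖ := by
        rw [hA.sub_eq_wedin hB]; exact norm_add₃_le
    _ ≤ _ := by rw [norm_neg]; linarith

end Norm

end Matrix

/-- Perturbation bound for Moore–Penrose pseudo-inverses (Stewart):
`‖B⁺ - A⁺‖ ≤ 3 max(‖A⁺‖², ‖B⁺‖²) ‖B - A‖` in spectral norm, where `A⁺, B⁺` are
characterized by the four Penrose conditions. -/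
theorem pseudoinverse_perturbation {m n : ℕ}
    (A B : Matrix (Fin m) (Fin n) ℝ) (Ap Bp : Matrix (Fin n) (Fin m) ℝ)
    (hA1 : A * Ap * A = A) (hA2 : Ap * A * Ap = Ap)
    (hA3 : (A * Ap)ᵀ = A * Ap) (hA4 : (Ap * A)ᵀ = Ap * A)
    (hB1 : B * Bp * B = B) (hB2 : Bp * B * Bp = Bp)
    (hB3 : (B * Bp)ᵀ = B * Bp) (hB4 : (Bp * B)ᵀ = Bp * B) :
    ‖Bp - Ap‖ ≤ 3 * max (‖Ap‖ ^ 2) (‖Bp‖ ^ 2) * ‖B - A‖ := by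
  have hA : A.IsMoorePenroseInverse Ap :=
    ⟨hA1, hA2, (Matrix.conjTranspose_eq_transpose_of_trivial _).trans hA3,
      (Matrix.conjTranspose_eq_transpose_of_trivial _).trans hA4⟩
  have hB : B.IsMoorePenroseInverse Bp :=
    ⟨hB1, hB2, (Matrix.conjTranspose_eq_transpose_of_trivial _).trans hB3,
      (Matrix.conjTranspose_eq_transpose_of_trivial _).trans hB4⟩
  have hAp := le_max_left (‖Ap‖ ^ 2) (‖Bp‖ ^ 2)
  have hBp := le_max_right (‖Ap‖ ^ 2) (‖Bp‖ ^ 2)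
  have hBpAp : ‖Bp‖ * ‖Ap‖ ≤ max (‖Ap‖ ^ 2) (‖Bp‖ ^ 2) := by
    nlinarith [sq_nonneg (‖Bp‖ - ‖Ap‖)]
  calc ‖Bp - Ap‖ ≤ (‖Bp‖ * ‖Ap‖ + ‖Bp‖ ^ 2 + ‖Ap‖ ^ 2) * ‖B - A‖ := hA.norm_sub_le hB
    _ ≤ 3 * max (‖Ap‖ ^ 2) (‖Bp‖ ^ 2) * ‖B - A‖ := by gcongr; linarith
end

section
/- Let O ∈ ℝ^{m×n} have full SVD O = U_r Σ_r V_rᵀ + U_{n−r} Σ_{n−r} V_{n−r}ᵀ where Σ_r contains the top r singular values, all strictly greater than λ > 0. Define X = U_r(Σ_r − λI_r)^{1/2} and Y = V_r(Σ_r − λI_r)^{1/2}. Then (X, Y) is a critical point of f(X,Y) = ½‖XYᵀ − O‖_F² + (λ/2)‖X‖_F² + (λ/2)‖Y‖_F², i.e., (XYᵀ − O)Y + λX = 0 and (XYᵀ − O)ᵀX + λY = 0. -/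
open scoped Matrix

/-- With `O = U_r Σ_r V_rᵀ + U₂ Σ₂ V₂ᵀ` (an SVD split, top singular values `σᵢ > λ`),
the point `X = U_r (Σ_r - λI)^{1/2}`, `Y = V_r (Σ_r - λI)^{1/2}` is a critical point of
the regularized objective: `(XYᵀ - O)Y + λX = 0` and `(XYᵀ - O)ᵀX + λY = 0`. -/
theorem regularized_critical_point {m n r s : ℕ} (lam : ℝ) (hlam : 0 < lam)
    (Ur : Matrix (Fin m) (Fin r) ℝ) (Vr : Matrix (Fin n) (Fin r) ℝ)
    (U2 : Matrix (Fin m) (Fin s) ℝ) (V2 : Matrix (Fin n) (Fin s) ℝ)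
    (σ : Fin r → ℝ) (S2 : Matrix (Fin s) (Fin s) ℝ)
    (hσ : ∀ i, lam < σ i)
    (hUr : Urᵀ * Ur = 1) (hVr : Vrᵀ * Vr = 1)
    (hUorth : U2ᵀ * Ur = 0) (hVorth : V2ᵀ * Vr = 0)
    (O : Matrix (Fin m) (Fin n) ℝ)
    (hO : O = Ur * Matrix.diagonal σ * Vrᵀ + U2 * S2 * V2ᵀ) :
    let X := Ur * Matrix.diagonal fun i => Real.sqrt (σ i - lam)
    let Y := Vr * Matrix.diagonal fun i => Real.sqrt (σ i - lam)
    (X * Yᵀ - O) * Y + lam • X = 0 ∧ (X * Yᵀ - O)ᵀ * X + lam • Y = 0 := by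
  intro X Y
  set D := (Matrix.diagonal fun i => Real.sqrt (σ i - lam)) with hDdef
  have hsq : (fun i => Real.sqrt (σ i - lam) * Real.sqrt (σ i - lam))
      = fun i => σ i - lam := by
    funext i; exact Real.mul_self_sqrt (by linarith [hσ i])
  have hD2 : D * D = Matrix.diagonal fun i => σ i - lam := by
    rw [hDdef, Matrix.diagonal_mul_diagonal, hsq]
  have hVV : Vrᵀ * (Vr * D) = D := by
    rw [← Matrix.mul_assoc, hVr, Matrix.one_mul]
  have hV2V : V2ᵀ * (Vr * D) = 0 := by
    rw [← Matrix.mul_assoc, hVorth, Matrix.zero_mul]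
  have hUU : Urᵀ * (Ur * D) = D := by
    rw [← Matrix.mul_assoc, hUr, Matrix.one_mul]
  have hU2U : U2ᵀ * (Ur * D) = 0 := by
    rw [← Matrix.mul_assoc, hUorth, Matrix.zero_mul]
  have hXY : X * Yᵀ = Ur * Matrix.diagonal (fun i => σ i - lam) * Vrᵀ := by
    show Ur * D * (Vr * D)ᵀ = _
    rw [Matrix.transpose_mul, Matrix.diagonal_transpose, Matrix.mul_assoc,
      ← Matrix.mul_assoc D D Vrᵀ, hD2, ← Matrix.mul_assoc]
  have hE : Matrix.diagonal (fun i => σ i - lam) * D - Matrix.diagonal σ * D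
      = (-lam) • D := by
    rw [hDdef, Matrix.diagonal_mul_diagonal, Matrix.diagonal_mul_diagonal]
    ext i j
    by_cases h : i = j <;>
      simp [Matrix.diagonal_apply, h, Matrix.sub_apply] <;> ring
  constructor
  · show (X * Yᵀ - O) * Y + lam • X = 0
    have h1 : (X * Yᵀ - O) * Y
        = Ur * (Matrix.diagonal (fun i => σ i - lam) * D)
          - Ur * (Matrix.diagonal σ * D) := by
      rw [hXY, hO]
      show (Ur * Matrix.diagonal (fun i => σ i - lam) * Vrᵀ
          - (Ur * Matrix.diagonal σ * Vrᵀ + U2 * S2 * V2ᵀ)) * (Vr * D) = _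
      simp only [Matrix.sub_mul, Matrix.add_mul, Matrix.mul_assoc, hVV, hV2V,
        Matrix.mul_zero, add_zero]
    rw [h1, ← Matrix.mul_sub, hE, Matrix.mul_smul]
    show (-lam) • (Ur * D) + lam • (Ur * D) = 0
    rw [neg_smul, neg_add_cancel]
  · show (X * Yᵀ - O)ᵀ * X + lam • Y = 0
    have hXYT : (X * Yᵀ - O)ᵀ
        = Vr * Matrix.diagonal (fun i => σ i - lam) * Urᵀ
          - (Vr * Matrix.diagonal σ * Urᵀ + V2 * S2ᵀ * U2ᵀ) := by
      rw [Matrix.transpose_sub, hXY, hO, Matrix.transpose_add]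
      simp [Matrix.transpose_mul, Matrix.mul_assoc]
    have h1 : (X * Yᵀ - O)ᵀ * X
        = Vr * (Matrix.diagonal (fun i => σ i - lam) * D)
          - Vr * (Matrix.diagonal σ * D) := by
      rw [hXYT]
      show (Vr * Matrix.diagonal (fun i => σ i - lam) * Urᵀ
          - (Vr * Matrix.diagonal σ * Urᵀ + V2 * S2ᵀ * U2ᵀ)) * (Ur * D) = _
      simp only [Matrix.sub_mul, Matrix.add_mul, Matrix.mul_assoc, hUU, hU2U,
        Matrix.mul_zero, add_zero]
    rw [h1, ← Matrix.mul_sub, hE, Matrix.mul_smul]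
    show (-lam) • (Vr * D) + lam • (Vr * D) = 0
    rw [neg_smul, neg_add_cancel]
end
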